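/- arXiv:0912.2182 — 2 statements merged into one kernel-verified Lean document; each statement's English description precedes it below -/
import Mathlib

section
/- For every positive integer n, Ω_n²/(Ω_{n-1}·Ω_{n+1}) equals the infinite product over k ≥ 1 of (2k+n)² / ((2k+n)² - 1). -/
open Real

noncomputable def unitBallVolume (n : ℕ) : ℝ :=
  Real.pi ^ ((n : ℝ) / 2) / Real.Gamma (1 + (n : ℝ) / 2)

/-
With `x = n / 2`, the Gamma-function formula for `Ω` gives
`Ω_n² / (Ω_{n-1} Ω_{n+1}) = Γ(x + 1/2) Γ(x + 3/2) / Γ(x + 1)²`, while the `k`-th factor of the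
product is `(x + 1 + k)² / ((x + 1/2 + k) (x + 3/2 + k))` (reindexed from `0`). Euler's limit
`Γ(s) = lim N^s N! / (s (s+1) ⋯ (s+N))` identifies the partial products of
`∏ (a + k)(b + k) / ((c + k)(d + k))` with ratios of these approximants as soon as `a + b = c + d`,
since then the powers of `N` cancel; the product, whose factors are `1 + O(1/k²)`, therefore
converges unconditionally to `Γ(c) Γ(d) / (Γ(a) Γ(b))`.
-/

open Finset Filter Topology

lemma summable_one_div_add_mul_add {c d : ℝ} (hc : 0 < c) (hd : 0 < d) :
    Summable fun k : ℕ => 1 / ((c + k) * (d + k)) := by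
  set m := min c d
  have hm : 0 < m := lt_min hc hd
  have hsq : Summable fun k : ℕ => 1 / (m + k) ^ 2 := by
    refine ((Real.summable_one_div_nat_add_rpow m 2).mpr one_lt_two).congr fun k => ?_
    rw [abs_of_pos (by positivity), rpow_two, add_comm]
  refine hsq.of_nonneg_of_le (fun k => by positivity) fun k => ?_
  gcongr
  rw [sq]
  gcongr
  exacts [min_le_left c d, min_le_right c d]

namespace Real

variable {a b c d : ℝ}

lemma prod_range_mul_div_mul_eq_GammaSeq (h : a + b = c + d) {N : ℕ} (hN : N ≠ 0) :
    ∏ j ∈ range (N + 1), (a + j) * (b + j) / ((c + j) * (d + j)) =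
      GammaSeq c N * GammaSeq d N / (GammaSeq a N * GammaSeq b N) := by
  have hNpos : (0 : ℝ) < N := by positivity
  have hpow : (N : ℝ) ^ c * (N : ℝ) ^ d = (N : ℝ) ^ a * (N : ℝ) ^ b := by
    rw [← rpow_add hNpos, ← rpow_add hNpos, h]
  have : (N : ℝ) ^ a * (N : ℝ) ^ b * (N.factorial : ℝ) ^ 2 ≠ 0 := by positivity
  simp only [GammaSeq, prod_div_distrib, prod_mul_distrib]
  field_simp
  rw [mul_assoc _ (_ ^ c), hpow, mul_assoc]

lemma tendsto_prod_range_mul_div_mul (h : a + b = c + d) (ha : 0 < a) (hb : 0 < b) :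
    Tendsto (fun N => ∏ j ∈ range N, (a + j) * (b + j) / ((c + j) * (d + j))) atTop
      (𝓝 (Gamma c * Gamma d / (Gamma a * Gamma b))) := by
  rw [← tendsto_add_atTop_iff_nat 1]
  refine (((GammaSeq_tendsto_Gamma c).mul (GammaSeq_tendsto_Gamma d)).div
    ((GammaSeq_tendsto_Gamma a).mul (GammaSeq_tendsto_Gamma b))
    (mul_pos (Gamma_pos_of_pos ha) (Gamma_pos_of_pos hb)).ne').congr' ?_
  filter_upwards [eventually_ne_atTop 0] with N hN
  exact (prod_range_mul_div_mul_eq_GammaSeq h hN).symm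

lemma multipliable_mul_div_mul (h : a + b = c + d) (hc : 0 < c) (hd : 0 < d) :
    Multipliable fun k : ℕ => (a + k) * (b + k) / ((c + k) * (d + k)) := by
  have hterm : ∀ k : ℕ, (a + k) * (b + k) / ((c + k) * (d + k)) =
      1 + (a * b - c * d) * (1 / ((c + k) * (d + k))) := by
    intro k
    have : (c + k) * (d + k) ≠ 0 := by positivity
    field_simp
    linear_combination (k : ℝ) * h
  simp_rw [hterm]
  exact Real.multipliable_one_add_of_summable
    ((summable_one_div_add_mul_add hc hd).mul_left _)

lemma hasProd_mul_div_mul (h : a + b = c + d) (ha : 0 < a) (hb : 0 < b) (hc : 0 < c)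
    (hd : 0 < d) :
    HasProd (fun k : ℕ => (a + k) * (b + k) / ((c + k) * (d + k)))
      (Gamma c * Gamma d / (Gamma a * Gamma b)) := by
  have hmul := multipliable_mul_div_mul h hc hd
  convert hmul.hasProd
  exact tendsto_nhds_unique (tendsto_prod_range_mul_div_mul h ha hb)
    hmul.hasProd.tendsto_prod_nat

end Real

lemma unitBallVolume_sq_div {n : ℕ} (hn : 1 ≤ n) :
    unitBallVolume n ^ 2 / (unitBallVolume (n - 1) * unitBallVolume (n + 1)) =
      Gamma (n / 2 + 1 / 2) * Gamma (n / 2 + 3 / 2) / Gamma (n / 2 + 1) ^ 2 := by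
  have hpi : π ^ ((n - 1 : ℕ) / 2 : ℝ) * π ^ ((n + 1 : ℕ) / 2 : ℝ) = (π ^ ((n : ℝ) / 2)) ^ 2 := by
    rw [← rpow_add pi_pos, ← rpow_natCast, ← rpow_mul pi_pos.le]
    push_cast [hn]
    ring_nf
  have : π ^ ((n : ℝ) / 2) ≠ 0 := by positivity
  simp only [unitBallVolume, div_pow, div_mul_div_comm, div_div_div_eq, hpi]
  push_cast [hn]
  field_simp
  ring_nf

theorem stmt_10 (n : ℕ) (hn : 1 ≤ n) :
    unitBallVolume n ^ 2 / (unitBallVolume (n - 1) * unitBallVolume (n + 1)) =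
      ∏' k : ℕ, (2 * ((k : ℝ) + 1) + n) ^ 2 / ((2 * ((k : ℝ) + 1) + n) ^ 2 - 1) := by
  have hterm (k : ℕ) : (2 * ((k : ℝ) + 1) + n) ^ 2 / ((2 * ((k : ℝ) + 1) + n) ^ 2 - 1) =
      (n / 2 + 1 + k) * (n / 2 + 1 + k) / ((n / 2 + 1 / 2 + k) * (n / 2 + 3 / 2 + k)) := by
    have hden : (2 * ((k : ℝ) + 1) + n) ^ 2 - 1 = (2 * k + n + 1) * (2 * k + n + 3) := by ring
    rw [hden, div_eq_div_iff (by positivity) (by positivity)]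
    ring
  have hprod := Real.hasProd_mul_div_mul (a := n / 2 + 1) (b := n / 2 + 1) (c := n / 2 + 1 / 2)
    (d := n / 2 + 3 / 2) (by ring) (by positivity) (by positivity) (by positivity) (by positivity)
  rw [unitBallVolume_sq_div hn, tprod_congr hterm, hprod.tprod_eq, sq]
end

section
/- For every positive integer n, Ω_n²/(Ω_{n-1}·Ω_{n+1}) < 1 + 1/n; equivalently, the sequence n·Ω_n/Ω_{n-1} is strictly increasing in n. -/
open Real

lemma ubv_pos (k : ℕ) : 0 < unitBallVolume k := by
  unfold unitBallVolume
  have h1 : 0 < Real.Gamma (1 + (k : ℝ) / 2) :=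
    Real.Gamma_pos_of_pos (by positivity)
  positivity

lemma ubv_step (k : ℕ) :
    unitBallVolume (k + 2) = unitBallVolume k * (2 * π / ((k : ℝ) + 2)) := by
  unfold unitBallVolume
  have hc : ((k + 2 : ℕ) : ℝ) / 2 = (k : ℝ) / 2 + 1 := by push_cast; ring
  have hg : Real.Gamma (1 + ((k + 2 : ℕ) : ℝ) / 2)
      = (1 + (k : ℝ) / 2) * Real.Gamma (1 + (k : ℝ) / 2) := by
    rw [hc, show (1 : ℝ) + ((k : ℝ) / 2 + 1) = (1 + (k : ℝ) / 2) + 1 by ring]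
    exact Real.Gamma_add_one (by positivity)
  rw [hg, hc, Real.rpow_add Real.pi_pos, Real.rpow_one]
  have hΓ : Real.Gamma (1 + (k : ℝ) / 2) ≠ 0 :=
    (Real.Gamma_pos_of_pos (by positivity)).ne'
  have hk2 : ((k : ℝ) + 2) ≠ 0 := by positivity
  have hk1 : (1 + (k : ℝ) / 2) ≠ 0 := by positivity
  field_simp
  ring

lemma gamma_sq_le {x : ℝ} (hx : 0 < x) :
    Real.Gamma (x + 1 / 2) ^ 2 ≤ Real.Gamma x * Real.Gamma (x + 1) := by
  have h := Real.convexOn_log_Gamma.2 (Set.mem_Ioi.2 hx)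
    (Set.mem_Ioi.2 (by linarith : (0 : ℝ) < x + 1))
    (by norm_num : (0:ℝ) ≤ 1/2) (by norm_num : (0:ℝ) ≤ 1/2) (by norm_num)
  have hmid : (1/2 : ℝ) • x + (1/2 : ℝ) • (x + 1) = x + 1/2 := by
    simp [smul_eq_mul]; ring
  rw [hmid] at h
  simp only [Function.comp_apply, smul_eq_mul] at h
  have hp1 : 0 < Real.Gamma (x + 1/2) := Real.Gamma_pos_of_pos (by linarith)
  have hp2 : 0 < Real.Gamma x := Real.Gamma_pos_of_pos hx
  have hp3 : 0 < Real.Gamma (x + 1) := Real.Gamma_pos_of_pos (by linarith)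
  have h2 : Real.log (Real.Gamma (x + 1/2) ^ 2) ≤ Real.log (Real.Gamma x * Real.Gamma (x + 1)) := by
    rw [Real.log_pow, Real.log_mul hp2.ne' hp3.ne']
    push_cast
    linarith
  exact (Real.log_le_log_iff (by positivity) (by positivity)).mp h2

lemma ubv_conv (k : ℕ) :
    unitBallVolume k * unitBallVolume (k + 2) ≤ unitBallVolume (k + 1) ^ 2 := by
  unfold unitBallVolume
  have hΓ0 : 0 < Real.Gamma (1 + (k : ℝ) / 2) := Real.Gamma_pos_of_pos (by positivity)
  have hΓ1 : 0 < Real.Gamma (1 + ((k + 1 : ℕ) : ℝ) / 2) := Real.Gamma_pos_of_pos (by positivity)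
  have hΓ2 : 0 < Real.Gamma (1 + ((k + 2 : ℕ) : ℝ) / 2) := Real.Gamma_pos_of_pos (by positivity)
  have hg : Real.Gamma (1 + ((k + 1 : ℕ) : ℝ) / 2) ^ 2
      ≤ Real.Gamma (1 + (k : ℝ) / 2) * Real.Gamma (1 + ((k + 2 : ℕ) : ℝ) / 2) := by
    have := gamma_sq_le (x := 1 + (k : ℝ) / 2) (by positivity)
    have e1 : (1 : ℝ) + ((k + 1 : ℕ) : ℝ) / 2 = (1 + (k : ℝ) / 2) + 1 / 2 := by
      push_cast; ring
    have e2 : (1 : ℝ) + ((k + 2 : ℕ) : ℝ) / 2 = (1 + (k : ℝ) / 2) + 1 := by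
      push_cast; ring
    rw [e1, e2]
    exact this
  have hpi : π ^ ((k : ℝ) / 2) * π ^ (((k + 2 : ℕ) : ℝ) / 2)
      = (π ^ (((k + 1 : ℕ) : ℝ) / 2)) ^ 2 := by
    rw [← Real.rpow_natCast (π ^ (((k + 1 : ℕ) : ℝ) / 2)) 2, ← Real.rpow_mul Real.pi_pos.le,
      ← Real.rpow_add Real.pi_pos]
    congr 1
    push_cast; ring
  have hpp0 : (0:ℝ) < π ^ ((k : ℝ) / 2) := Real.rpow_pos_of_pos Real.pi_pos _
  have hpp1 : (0:ℝ) < π ^ (((k + 1 : ℕ) : ℝ) / 2) := Real.rpow_pos_of_pos Real.pi_pos _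
  have hpp2 : (0:ℝ) < π ^ (((k + 2 : ℕ) : ℝ) / 2) := Real.rpow_pos_of_pos Real.pi_pos _
  rw [div_mul_div_comm, div_pow, hpi, div_le_div_iff₀ (by positivity) (by positivity)]
  calc (π ^ (((k + 1 : ℕ) : ℝ) / 2)) ^ 2 * (Real.Gamma (1 + ((k + 1:ℕ) : ℝ) / 2) ^ 2)
      ≤ (π ^ (((k + 1 : ℕ) : ℝ) / 2)) ^ 2 *
        (Real.Gamma (1 + (k : ℝ) / 2) * Real.Gamma (1 + ((k + 2 : ℕ) : ℝ) / 2)) := by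
        apply mul_le_mul_of_nonneg_left hg (by positivity)
    _ = (π ^ (((k+1:ℕ) : ℝ) / 2)) ^ 2 *
        (Real.Gamma (1 + (k : ℝ) / 2) * Real.Gamma (1 + ((k + 2 : ℕ) : ℝ) / 2)) := rfl

lemma ubv_main (m : ℕ) :
    ((m : ℝ) + 1) * unitBallVolume (m + 1) ^ 2 < 2 * π * unitBallVolume m ^ 2 := by
  set B0 := unitBallVolume m with hB0
  set B1 := unitBallVolume (m + 1) with hB1
  have hB0p : 0 < B0 := ubv_pos m
  have hB1p : 0 < B1 := ubv_pos (m + 1)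
  have hB2p : 0 < unitBallVolume (m + 2) := ubv_pos (m + 2)
  have hs2 : unitBallVolume (m + 2) = B0 * (2 * π / ((m : ℝ) + 2)) := ubv_step m
  have hs3 : unitBallVolume (m + 3) = B1 * (2 * π / ((m : ℝ) + 3)) := by
    have := ubv_step (m + 1)
    push_cast at this ⊢
    convert this using 3 <;> ring
  -- h1 : (m+3) * B(m+3)^2 ≤ 2π * B(m+2)^2
  have hconv : unitBallVolume (m + 1) * unitBallVolume (m + 3) ≤ unitBallVolume (m + 2) ^ 2 := by
    have := ubv_conv (m + 1)
    convert this using 3 <;> ring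
  have h1 : ((m : ℝ) + 3) * unitBallVolume (m + 3) ^ 2 ≤ 2 * π * unitBallVolume (m + 2) ^ 2 := by
    have key : ((m : ℝ) + 3) * unitBallVolume (m + 3) ^ 2
        = 2 * π * (unitBallVolume (m + 1) * unitBallVolume (m + 3)) := by
      rw [hs3]; field_simp; ring
    rw [key]
    have := mul_le_mul_of_nonneg_left hconv (by positivity : (0:ℝ) ≤ 2 * π)
    linarith
  -- h2 : (m+1) * B1^2 * B(m+2)^2 < (m+3) * B(m+3)^2 * B0^2
  have h2 : ((m : ℝ) + 1) * B1 ^ 2 * unitBallVolume (m + 2) ^ 2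
      < ((m : ℝ) + 3) * unitBallVolume (m + 3) ^ 2 * B0 ^ 2 := by
    rw [hs2, hs3]
    have hm2 : ((m : ℝ) + 2) ≠ 0 := by positivity
    have hm3 : ((m : ℝ) + 3) ≠ 0 := by positivity
    have hlt : ((m : ℝ) + 1) / ((m : ℝ) + 2) ^ 2 < 1 / ((m : ℝ) + 3) := by
      rw [div_lt_div_iff₀ (by positivity) (by positivity)]
      nlinarith [Nat.cast_nonneg (α := ℝ) m]
    have hfac : (0:ℝ) < (2 * π) ^ 2 * (B0 ^ 2 * B1 ^ 2) := by positivity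
    have expand1 : ((m : ℝ) + 1) * B1 ^ 2 * (B0 * (2 * π / ((m : ℝ) + 2))) ^ 2
        = (((m : ℝ) + 1) / ((m : ℝ) + 2) ^ 2) * ((2 * π) ^ 2 * (B0 ^ 2 * B1 ^ 2)) := by
      field_simp
    have expand2 : ((m : ℝ) + 3) * (B1 * (2 * π / ((m : ℝ) + 3))) ^ 2 * B0 ^ 2
        = (1 / ((m : ℝ) + 3)) * ((2 * π) ^ 2 * (B0 ^ 2 * B1 ^ 2)) := by
      field_simp
    rw [expand1, expand2]
    exact mul_lt_mul_of_pos_right hlt hfac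
  have h3 : ((m : ℝ) + 1) * B1 ^ 2 * unitBallVolume (m + 2) ^ 2
      < 2 * π * B0 ^ 2 * unitBallVolume (m + 2) ^ 2 := by
    calc ((m : ℝ) + 1) * B1 ^ 2 * unitBallVolume (m + 2) ^ 2
        < ((m : ℝ) + 3) * unitBallVolume (m + 3) ^ 2 * B0 ^ 2 := h2
      _ ≤ 2 * π * unitBallVolume (m + 2) ^ 2 * B0 ^ 2 := by
          apply mul_le_mul_of_nonneg_right h1 (by positivity)
      _ = 2 * π * B0 ^ 2 * unitBallVolume (m + 2) ^ 2 := by ring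
  exact lt_of_mul_lt_mul_right h3 (by positivity)

theorem stmt_19 :
    (∀ n : ℕ, 1 ≤ n →
        unitBallVolume n ^ 2 / (unitBallVolume (n - 1) * unitBallVolume (n + 1)) <
          1 + 1 / (n : ℝ)) ∧
      (∀ n : ℕ, 1 ≤ n →
        (n : ℝ) * unitBallVolume n / unitBallVolume (n - 1) <
          ((n : ℝ) + 1) * unitBallVolume (n + 1) / unitBallVolume n) := by
  constructor
  · intro n hn
    obtain ⟨m, rfl⟩ := Nat.exists_eq_add_of_le hn
    rw [Nat.add_comm 1 m]
    simp only [Nat.add_sub_cancel]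
    have hB0 : 0 < unitBallVolume m := ubv_pos m
    have hB1 : 0 < unitBallVolume (m + 1) := ubv_pos (m + 1)
    have hB2 : 0 < unitBallVolume (m + 2) := ubv_pos (m + 2)
    have hmain := ubv_main m
    have hs2 : unitBallVolume (m + 2) = unitBallVolume m * (2 * π / ((m : ℝ) + 2)) := ubv_step m
    have hn1 : (0:ℝ) < (m : ℝ) + 1 := by positivity
    rw [div_lt_iff₀ (by positivity)]
    have hcast : ((m + 1 : ℕ) : ℝ) = (m : ℝ) + 1 := by push_cast; ring
    rw [hcast]
    have hrhs : (1 + 1 / ((m : ℝ) + 1)) * (unitBallVolume m * unitBallVolume (m + 2))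
        = 2 * π * unitBallVolume m ^ 2 / ((m : ℝ) + 1) := by
      rw [hs2]
      field_simp
      ring
    rw [hrhs, lt_div_iff₀ hn1]
    linarith
  · intro n hn
    obtain ⟨m, rfl⟩ := Nat.exists_eq_add_of_le hn
    rw [Nat.add_comm 1 m]
    simp only [Nat.add_sub_cancel]
    have hB0 : 0 < unitBallVolume m := ubv_pos m
    have hB1 : 0 < unitBallVolume (m + 1) := ubv_pos (m + 1)
    have hmain := ubv_main m
    have hs2 : unitBallVolume (m + 2) = unitBallVolume m * (2 * π / ((m : ℝ) + 2)) := ubv_step m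
    have hcast : ((m + 1 : ℕ) : ℝ) = (m : ℝ) + 1 := by push_cast; ring
    rw [hcast]
    rw [div_lt_div_iff₀ hB0 hB1]
    have key : (((m : ℝ) + 1) + 1) * unitBallVolume (m + 1 + 1) * unitBallVolume m
        = 2 * π * unitBallVolume m ^ 2 := by
      have : unitBallVolume (m + 1 + 1) = unitBallVolume (m + 2) := by norm_num
      rw [this, hs2]
      field_simp
      ring
    calc ((m : ℝ) + 1) * unitBallVolume (m + 1) * unitBallVolume (m + 1)
        = ((m : ℝ) + 1) * unitBallVolume (m + 1) ^ 2 := by ring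
      _ < 2 * π * unitBallVolume m ^ 2 := hmain
      _ = (((m : ℝ) + 1) + 1) * unitBallVolume (m + 1 + 1) * unitBallVolume m := key.symm
end
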